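/- Every non-periodic linearly repetitive Delone set X in ℝ^d is densely repetitive: there exists a constant C_DR(X) such that M_X(T) ≤ C_DR(X) · N_X(T)^{1/d} for all T ≥ 1. -/

import Mathlib

set_option maxHeartbeats 1000000


open Metric

/-- `X` is a Delone set in `ℝ^d` with packing radius `r` and covering radius `R`:
every closed ball of radius `r` meets at most one point of `X` and every closed
ball of radius `R` meets at least one point of `X`. -/
def IsDelone {d : ℕ} (X : Set (EuclideanSpace ℝ (Fin d))) (r R : ℝ) : Prop :=
  0 < r ∧ 0 < R ∧ (∀ p, (X ∩ closedBall p r).Subsingleton) ∧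
    (∀ p, (X ∩ closedBall p R).Nonempty)

/-- The `T`-patch of `X` centered at `x`: `(X - x) ∩ B(0,T)`. -/
def patch {d : ℕ} (X : Set (EuclideanSpace ℝ (Fin d)))
    (x : EuclideanSpace ℝ (Fin d)) (T : ℝ) : Set (EuclideanSpace ℝ (Fin d)) :=
  ((fun z => z - x) '' X) ∩ closedBall 0 T

/-- `M` is a repetitivity bound for `X` at scale `T` (i.e. `M_X(T) ≤ M`):
every closed ball of radius `M` contains the center of a translate of
every `T`-patch of `X`. -/
def RepBound {d : ℕ} (X : Set (EuclideanSpace ℝ (Fin d))) (T M : ℝ) : Prop :=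
  ∀ p : EuclideanSpace ℝ (Fin d), ∀ x ∈ X, ∃ y ∈ X,
    y ∈ closedBall p M ∧ patch X y T = patch X x T

/-- The number `N_X(T)` of distinct `T`-patches of `X` up to translation. -/
noncomputable def patchCount {d : ℕ} (X : Set (EuclideanSpace ℝ (Fin d))) (T : ℝ) : ℕ :=
  {P | ∃ x ∈ X, P = patch X x T}.ncard



lemma RepBound.mono {d : ℕ} {X : Set (EuclideanSpace ℝ (Fin d))} {T M M' : ℝ}
    (h : RepBound X T M) (hMM' : M ≤ M') : RepBound X T M' := by
  intro p x hx
  obtain ⟨y, hy, hb, hp⟩ := h p x hx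
  exact ⟨y, hy, closedBall_subset_closedBall hMM' hb, hp⟩

lemma mem_patch_iff {d : ℕ} {X : Set (EuclideanSpace ℝ (Fin d))}
    {x z : EuclideanSpace ℝ (Fin d)} {T : ℝ} :
    z ∈ patch X x T ↔ (x + z ∈ X ∧ ‖z‖ ≤ T) := by
  constructor
  · rintro ⟨⟨u, hu, rfl⟩, hb⟩
    refine ⟨by simpa using hu, by simpa using hb⟩
  · rintro ⟨h1, h2⟩
    exact ⟨⟨x + z, h1, by simp⟩, by simpa using h2⟩

lemma patch_eq_apply {d : ℕ} {X : Set (EuclideanSpace ℝ (Fin d))}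
    {x y : EuclideanSpace ℝ (Fin d)} {T : ℝ}
    (h : patch X y T = patch X x T) {z : EuclideanSpace ℝ (Fin d)} (hz : ‖z‖ ≤ T) :
    y + z ∈ X ↔ x + z ∈ X := by
  have h1 := Set.ext_iff.mp h z
  rw [mem_patch_iff, mem_patch_iff] at h1
  exact ⟨fun hy => (h1.mp ⟨hy, hz⟩).1, fun hx => (h1.mpr ⟨hx, hz⟩).1⟩

lemma sep_lemma {d : ℕ} {X : Set (EuclideanSpace ℝ (Fin d))} {R C : ℝ}
    (hR : 0 < R) (hC : 1 ≤ C)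
    (hcov : ∀ p, (X ∩ closedBall p R).Nonempty)
    (hLR' : ∀ T ≥ (1:ℝ), RepBound X T (C*T))
    (hnp : ∀ t : EuclideanSpace ℝ (Fin d), t ≠ 0 → (fun z => z + t) '' X ≠ X)
    {T : ℝ} (hT1 : 2*C ≤ T) (hT2 : 4*C*R ≤ T)
    {x y : EuclideanSpace ℝ (Fin d)}
    (hp : patch X y T = patch X x T) (hdist : ‖y - x‖ ≤ T/(4*C)) : y = x := by
  by_contra hne
  set t := y - x with ht
  have hC0 : (0:ℝ) < C := lt_of_lt_of_le one_pos hC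
  have hT0 : (0:ℝ) < T := lt_of_lt_of_le (by positivity) hT1
  have htne : t ≠ 0 := sub_ne_zero.mpr hne
  -- invariance on the ball B(x,T)
  have inv : ∀ z : EuclideanSpace ℝ (Fin d), ‖z - x‖ ≤ T → (z ∈ X ↔ z + t ∈ X) := by
    intro z hz
    have h1 := patch_eq_apply hp (z := z - x) hz
    have e1 : y + (z - x) = z + t := by rw [ht]; abel
    have e2 : x + (z - x) = z := by abel
    rw [e1, e2] at h1
    exact h1.symm
  -- global invariance
  have key : ∀ a : EuclideanSpace ℝ (Fin d), (a ∈ X ↔ a + t ∈ X) := by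
    by_contra hk
    push_neg at hk
    obtain ⟨a, hA⟩ := hk
    obtain ⟨a', ha'X, ha'b⟩ := hcov a
    set s := T/(2*C) with hs
    have hs1 : (1:ℝ) ≤ s := by
      rw [hs, le_div_iff₀ (by positivity)]; linarith
    obtain ⟨v, hvX, hvb, hvp⟩ := hLR' s hs1 x a' ha'X
    set w := a - a' with hw
    have hwR : ‖w‖ ≤ R := by
      have := mem_closedBall.mp ha'b
      rw [dist_eq_norm] at this
      calc ‖w‖ = ‖a' - a‖ := by rw [hw, norm_sub_rev]
      _ ≤ R := this
    have hRs : R ≤ T/(4*C) := by rw [le_div_iff₀ (by positivity)]; linarith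
    have htn : ‖t‖ ≤ T/(4*C) := hdist
    have hws : ‖w‖ ≤ s := le_trans hwR (by rw [hs]; rw [le_div_iff₀ (by positivity)] at hRs ⊢; linarith)
    have hwts : ‖w + t‖ ≤ s := by
      calc ‖w + t‖ ≤ ‖w‖ + ‖t‖ := norm_add_le _ _
      _ ≤ T/(4*C) + T/(4*C) := add_le_add (le_trans hwR hRs) htn
      _ = s := by rw [hs]; field_simp; ring
    have trans1 : v + w ∈ X ↔ a ∈ X := by
      have h1 := patch_eq_apply hvp (z := w) hws
      rwa [show a' + w = a by rw [hw]; abel] at h1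
    have trans2 : v + (w + t) ∈ X ↔ a + t ∈ X := by
      have h1 := patch_eq_apply hvp (z := w + t) hwts
      rwa [show a' + (w + t) = a + t by rw [hw]; abel] at h1
    have hzb : ‖(v + w) - x‖ ≤ T := by
      have h1 : ‖v - x‖ ≤ C * s := by
        have := mem_closedBall.mp hvb; rwa [dist_eq_norm] at this
      have h2 : C * s = T/2 := by rw [hs]; field_simp
      calc ‖(v + w) - x‖ ≤ ‖v - x‖ + ‖w‖ := by
            rw [show (v + w) - x = (v - x) + w by abel]; exact norm_add_le _ _
      _ ≤ T/2 + R := add_le_add (h2 ▸ h1) hwR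
      _ ≤ T := by nlinarith
    have hinv := inv (v + w) hzb
    rw [show v + w + t = v + (w + t) by abel] at hinv
    have hiff : a ∈ X ↔ a + t ∈ X := (trans1.symm.trans hinv).trans trans2
    rcases hA with ⟨h1, h2⟩ | ⟨h1, h2⟩
    · exact h2 (hiff.mp h1)
    · exact h1 (hiff.mpr h2)
  refine hnp t htne ?_
  ext b
  constructor
  · rintro ⟨a, ha, rfl⟩; exact (key a).mp ha
  · intro hb
    exact ⟨b - t, (key (b - t)).mpr (by simpa using hb), by simp⟩

lemma finite_inter {d : ℕ} {X : Set (EuclideanSpace ℝ (Fin d))} {r : ℝ} (hr : 0 < r)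
    (hpack : ∀ p, (X ∩ closedBall p r).Subsingleton)
    (p : EuclideanSpace ℝ (Fin d)) (ρ : ℝ) :
    (X ∩ closedBall p ρ).Finite := by
  have htb : TotallyBounded (closedBall p ρ) := (isCompact_closedBall p ρ).totallyBounded
  obtain ⟨t, htf, hcov⟩ := totallyBounded_iff.mp htb (r/2) (by positivity)
  have hsub : X ∩ closedBall p ρ ⊆ ⋃ y ∈ t, (X ∩ ball y (r/2)) := by
    intro u hu
    obtain ⟨y, hy, hyb⟩ := Set.mem_iUnion₂.mp (hcov hu.2)
    exact Set.mem_iUnion₂.mpr ⟨y, hy, hu.1, hyb⟩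
  refine Set.Finite.subset (Set.Finite.biUnion htf (fun y _ => ?_)) hsub
  refine Set.Subsingleton.finite (fun u hu v hv => ?_)
  refine hpack u ⟨hu.1, mem_closedBall_self hr.le⟩ ⟨hv.1, ?_⟩
  have : dist v u < r := by
    have h1 := mem_ball.mp hu.2
    have h2 := mem_ball.mp hv.2
    calc dist v u ≤ dist v y + dist y u := dist_triangle _ _ _
    _ < r/2 + r/2 := by rw [dist_comm y u]; exact add_lt_add h2 h1
    _ = r := by ring
  exact mem_closedBall.mpr this.le

lemma coord_le_norm {d : ℕ} (x : EuclideanSpace ℝ (Fin d)) (i : Fin d) : |x i| ≤ ‖x‖ := by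
  rw [EuclideanSpace.norm_eq, ← Real.sqrt_sq_eq_abs]
  apply Real.sqrt_le_sqrt
  have h := Finset.single_le_sum (f := fun j => ‖x j‖^2) (fun j _ => by positivity)
    (Finset.mem_univ i)
  have h2 : x i ^ 2 = ‖x i‖^2 := by rw [Real.norm_eq_abs, sq_abs]
  simp only [] at h; linarith

lemma norm_le_of_coords {d : ℕ} (x : EuclideanSpace ℝ (Fin d)) (B : ℝ) (hB : 0 ≤ B)
    (h : ∀ i, |x i| ≤ B) : ‖x‖ ≤ Real.sqrt d * B := by
  rw [EuclideanSpace.norm_eq]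
  have hsum : ∑ i, ‖x i‖^2 ≤ (d:ℝ) * B^2 := by
    calc ∑ i, ‖x i‖^2 ≤ ∑ _i : Fin d, B^2 := Finset.sum_le_sum (fun i _ => by
          have := h i
          rw [Real.norm_eq_abs]
          nlinarith [abs_nonneg (x i)])
    _ = (d:ℝ) * B^2 := by rw [Finset.sum_const]; simp [mul_comm]
  calc Real.sqrt (∑ i, ‖x i‖^2) ≤ Real.sqrt ((d:ℝ) * B^2) := Real.sqrt_le_sqrt hsum
  _ = Real.sqrt d * B := by rw [Real.sqrt_mul (by positivity), Real.sqrt_sq hB]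

lemma one_le_abs_cast_sub {a b : ℕ} (h : a ≠ b) : (1:ℝ) ≤ |(a:ℝ) - (b:ℝ)| := by
  have h1 : ((a:ℤ)) - (b:ℤ) ≠ 0 := sub_ne_zero.mpr (by exact_mod_cast h)
  have h2 : (1:ℤ) ≤ |(a:ℤ) - (b:ℤ)| := Int.one_le_abs h1
  have h3 : ((|(a:ℤ) - (b:ℤ)| : ℤ) : ℝ) = |(a:ℝ) - (b:ℝ)| := by push_cast; ring_nf
  exact_mod_cast h3 ▸ (by exact_mod_cast h2 : (1:ℝ) ≤ ((|(a:ℤ) - (b:ℤ)| : ℤ):ℝ))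

theorem stmt6 {d : ℕ} (X : Set (EuclideanSpace ℝ (Fin d))) (r R : ℝ)
    (hX : IsDelone X r R)
    (hLR : ∃ C : ℝ, ∀ T ≥ (1:ℝ), RepBound X T (C * T))
    (hnp : ∀ t : EuclideanSpace ℝ (Fin d), t ≠ 0 → (fun z => z + t) '' X ≠ X) :
    ∃ CDR : ℝ, ∀ T ≥ (1:ℝ),
      RepBound X T (CDR * (patchCount X T : ℝ) ^ ((1:ℝ) / d)) := by
  obtain ⟨hr, hR, hpack, hcov⟩ := hX
  obtain ⟨C0, hLR0⟩ := hLR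
  rcases Nat.eq_zero_or_pos d with hd | hd
  · subst hd
    refine ⟨1, fun T hT p x hx => ⟨x, hx, ?_, rfl⟩⟩
    haveI : Subsingleton (EuclideanSpace ℝ (Fin 0)) :=
      ⟨fun a b => by ext i; exact i.elim0⟩
    rw [mem_closedBall, Subsingleton.elim x p, dist_self]
    positivity
  have hdR : (1:ℝ) ≤ (d:ℝ) := by exact_mod_cast hd
  have hdne : (d:ℝ) ≠ 0 := by linarith
  set C := max C0 1 with hCdef
  have hC1 : (1:ℝ) ≤ C := le_max_right _ _
  have hC0 : (0:ℝ) < C := lt_of_lt_of_le one_pos hC1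
  have hLR' : ∀ T ≥ (1:ℝ), RepBound X T (C*T) := fun T hT =>
    (hLR0 T hT).mono (by nlinarith [le_max_left C0 1])
  set sq := Real.sqrt d with hsq
  have hsq1 : (1:ℝ) ≤ sq := by
    rw [hsq, show (1:ℝ) = Real.sqrt 1 by simp]
    exact Real.sqrt_le_sqrt hdR
  set T0 : ℝ := 2*C + 4*C*R + 64*C*R*sq with hT0def
  have hT0pos : 0 < T0 := by positivity
  set CDR : ℝ := C*T0 + 64*C^2*R*sq with hCDRdef
  refine ⟨CDR, fun T hT => ?_⟩
  set PS := {P | ∃ x ∈ X, P = patch X x T} with hPS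
  have hPSfin : PS.Finite := by
    have hsub : PS ⊆ (fun z => patch X z T) ''
        (X ∩ closedBall (0:EuclideanSpace ℝ (Fin d)) (C*T)) := by
      rintro P ⟨x, hx, rfl⟩
      obtain ⟨y, hyX, hyb, hpe⟩ := hLR' T hT 0 x hx
      exact ⟨y, ⟨hyX, hyb⟩, hpe⟩
    exact ((finite_inter hr hpack 0 (C*T)).image _).subset hsub
  have hPSne : PS.Nonempty := by
    obtain ⟨x0, hx0, _⟩ := hcov 0
    exact ⟨patch X x0 T, x0, hx0, rfl⟩
  have hN : patchCount X T = PS.ncard := rfl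
  have hN1 : 1 ≤ patchCount X T := by
    rw [hN]; exact (Set.ncard_pos hPSfin).mpr hPSne
  have hpow0 : (0:ℝ) ≤ (patchCount X T : ℝ) ^ ((1:ℝ)/d) :=
    Real.rpow_nonneg (by positivity) _
  have hpow1 : (1:ℝ) ≤ (patchCount X T : ℝ) ^ ((1:ℝ)/d) := by
    calc (1:ℝ) = (1:ℝ) ^ ((1:ℝ)/d) := (Real.one_rpow _).symm
    _ ≤ _ := Real.rpow_le_rpow (by norm_num) (by exact_mod_cast hN1) (by positivity)
  rcases le_or_gt T T0 with hcase | hcase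
  · refine (hLR' T hT).mono ?_
    calc C*T ≤ C*T0 := by nlinarith
    _ ≤ C*T0 * ((patchCount X T:ℝ) ^ ((1:ℝ)/d)) :=
        le_mul_of_one_le_right (by positivity) hpow1
    _ ≤ CDR * ((patchCount X T:ℝ) ^ ((1:ℝ)/d)) := by
        rw [hCDRdef]; nlinarith [mul_nonneg (by positivity : (0:ℝ) ≤ 64*C^2*R*sq) hpow0]
  · set u := T/(32*C*R*sq) with hu
    have hu2 : (2:ℝ) ≤ u := by
      rw [hu, le_div_iff₀ (by positivity)]; nlinarith
    set m := ⌊u⌋₊ with hm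
    have hm1 : 1 ≤ m := Nat.le_floor (by push_cast; linarith)
    have hm1R : (1:ℝ) ≤ (m:ℝ) := by exact_mod_cast hm1
    have hmu : (m:ℝ) ≤ u := Nat.floor_le (by positivity)
    have hum : u/2 ≤ (m:ℝ) := by
      have := Nat.sub_one_lt_floor u
      rw [← hm] at this
      linarith
    set q : (Fin d → Fin m) → EuclideanSpace ℝ (Fin d) :=
      fun k => (EuclideanSpace.equiv (Fin d) ℝ).symm (fun i => 3*R*(k i)) with hq
    have hq_apply : ∀ k i, q k i = 3*R*(k i) := fun k i => rfl
    choose xk hxkX hxkb using fun k => hcov (q k)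
    have hxknorm : ∀ k, ‖xk k - q k‖ ≤ R := fun k => by
      have := mem_closedBall.mp (hxkb k); rwa [dist_eq_norm] at this
    have hqnorm : ∀ k, ‖q k‖ ≤ sq * (3*R*m) := by
      intro k
      apply norm_le_of_coords _ _ (by positivity)
      intro i
      rw [hq_apply, abs_of_nonneg (by positivity)]
      have hki : ((k i : ℕ):ℝ) ≤ (m:ℝ) := by exact_mod_cast (k i).2.le
      nlinarith
    have hqlow : ∀ k k', k ≠ k' → (3*R:ℝ) ≤ ‖q k - q k'‖ := by
      intro k k' hkk
      obtain ⟨i, hi⟩ := Function.ne_iff.mp hkk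
      have h1 : |(q k - q k') i| ≤ ‖q k - q k'‖ := coord_le_norm _ i
      have h2 : (q k - q k') i = 3*R*(((k i : ℕ):ℝ) - ((k' i : ℕ):ℝ)) := by
        have : (q k - q k') i = q k i - q k' i := rfl
        rw [this, hq_apply, hq_apply]; ring
      have h3 : (1:ℝ) ≤ |((k i : ℕ):ℝ) - ((k' i : ℕ):ℝ)| :=
        one_le_abs_cast_sub (fun h => hi (Fin.ext h))
      rw [h2, abs_mul, abs_of_nonneg (by positivity : (0:ℝ) ≤ 3*R)] at h1
      nlinarith
    have hsm : (1:ℝ) ≤ sq*(m:ℝ) := by nlinarith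
    have hdistb : ∀ k k', ‖xk k - xk k'‖ ≤ T/(4*C) := by
      intro k k'
      have tri : ‖xk k - xk k'‖ ≤ ‖xk k - q k‖ + ‖q k - q k'‖ + ‖q k' - xk k'‖ := by
        have h := dist_triangle4 (xk k) (q k) (q k') (xk k')
        simpa [dist_eq_norm] using h
      have hb : ‖q k - q k'‖ ≤ sq*(3*R*m) + sq*(3*R*m) :=
        (norm_sub_le _ _).trans (add_le_add (hqnorm k) (hqnorm k'))
      have hb2 : ‖q k' - xk k'‖ ≤ R := by rw [norm_sub_rev]; exact hxknorm k'
      have h2 : ‖xk k - xk k'‖ ≤ 8*R*sq*(m:ℝ) := by nlinarith [hxknorm k]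
      have h3 : (8:ℝ)*R*sq*(m:ℝ) ≤ 8*R*sq*u := mul_le_mul_of_nonneg_left hmu (by positivity)
      have h4 : (8:ℝ)*R*sq*u = T/(4*C) := by
        rw [hu]; field_simp; ring
      linarith
    have hsepk : ∀ k k', patch X (xk k) T = patch X (xk k') T → k = k' := by
      intro k k' hpe
      have hxeq : xk k = xk k' :=
        sep_lemma hR hC1 hcov hLR' hnp (T := T)
          (by nlinarith [mul_pos hC0 hR, mul_pos (mul_pos hC0 hR) (lt_of_lt_of_le one_pos hsq1)])
          (by nlinarith [hC0, mul_pos (mul_pos hC0 hR) (lt_of_lt_of_le one_pos hsq1)])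
          hpe (hdistb k k')
      by_contra hkk
      have h1 := hqlow k k' hkk
      have h2 : ‖q k - q k'‖ ≤ 2*R := by
        calc ‖q k - q k'‖ = ‖(q k - xk k) + (xk k' - q k')‖ := by rw [hxeq]; congr 1; abel
        _ ≤ ‖q k - xk k‖ + ‖xk k' - q k'‖ := norm_add_le _ _
        _ ≤ R + R := by
            refine add_le_add ?_ ?_
            · rw [norm_sub_rev]; exact hxknorm k
            · exact hxknorm k'
        _ = 2*R := by ring
      linarith
    classical
    set f : (Fin d → Fin m) → Set (EuclideanSpace ℝ (Fin d)) :=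
      fun k => patch X (xk k) T with hf
    have hfinj : Function.Injective f := fun k k' h => hsepk k k' h
    have hrange : Set.range f ⊆ PS := by
      rintro P ⟨k, rfl⟩; exact ⟨xk k, hxkX k, rfl⟩
    have hcard : m ^ d ≤ patchCount X T := by
      rw [hN]
      calc m ^ d = Nat.card (Fin d → Fin m) := by
            simp [Nat.card_eq_fintype_card]
      _ = Nat.card (Set.range f) := (Nat.card_range_of_injective hfinj).symm
      _ = (Set.range f).ncard := (Nat.card_coe_set_eq _)
      _ ≤ PS.ncard := Set.ncard_le_ncard hrange hPSfin
    have hmpow : (m:ℝ) ≤ (patchCount X T : ℝ) ^ ((1:ℝ)/d) := by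
      have h1 : ((m:ℝ) ^ (d:ℕ)) ^ ((1:ℝ)/d) ≤ (patchCount X T:ℝ) ^ ((1:ℝ)/d) := by
        refine Real.rpow_le_rpow (by positivity) ?_ (by positivity)
        exact_mod_cast hcard
      rwa [← Real.rpow_natCast (m:ℝ) d, ← Real.rpow_mul (by positivity),
        mul_one_div, div_self hdne, Real.rpow_one] at h1
    refine (hLR' T hT).mono ?_
    have key : C*T = 64*C^2*R*sq * (u/2) := by
      rw [hu]; field_simp; ring
    calc C*T = 64*C^2*R*sq * (u/2) := key
    _ ≤ 64*C^2*R*sq * ((patchCount X T:ℝ) ^ ((1:ℝ)/d)) := by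
        exact mul_le_mul_of_nonneg_left (hum.trans hmpow) (by positivity)
    _ ≤ CDR * ((patchCount X T:ℝ) ^ ((1:ℝ)/d)) := by
        rw [hCDRdef]; nlinarith [mul_nonneg (mul_nonneg hC0.le hT0pos.le) hpow0]
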